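/- arXiv:2408.03921 — 5 statements merged into one kernel-verified Lean document; each statement's English description precedes it below -/
import Mathlib

section
/- Let F be a finite family of compact intervals in ℝ. Then the minimum number of points needed to intersect every interval in F equals the maximum size of a subfamily of pairwise disjoint intervals; that is, τ(F) = ν(F). -/
lemma icc_disj {a b c d : ℝ} (h : b < c) : Disjoint (Set.Icc a b) (Set.Icc c d) := by
  rw [Set.disjoint_left]
  rintro x ⟨_, h1⟩ ⟨h2, _⟩
  linarith

/-- Greedy construction: a piercing set and a matching of the same size,
with every piercing point lying to the right of some left endpoint. -/
lemma gallai_greedy : ∀ (F : Finset (ℝ × ℝ)), (∀ p ∈ F, p.1 ≤ p.2) →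
    ∃ (P : Finset ℝ) (M : Finset (ℝ × ℝ)), P.card = M.card ∧ M ⊆ F ∧
      (∀ p ∈ F, ∃ t ∈ P, t ∈ Set.Icc p.1 p.2) ∧
      (∀ p ∈ M, ∀ q ∈ M, p ≠ q → Disjoint (Set.Icc p.1 p.2) (Set.Icc q.1 q.2)) ∧
      (∀ t ∈ P, ∃ q ∈ F, q.1 ≤ t) := by
  intro F
  induction F using Finset.strongInduction with
  | _ F ih =>
    intro hF
    rcases F.eq_empty_or_nonempty with rfl | hne
    · exact ⟨∅, ∅, rfl, Finset.Subset.refl _, by simp, by simp, by simp⟩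
    · obtain ⟨p₀, hp₀F, hp₀min⟩ := F.exists_min_image Prod.snd hne
      set F' := F.filter (fun q => p₀.2 < q.1) with hF'
      have hF'sub : F' ⊆ F := Finset.filter_subset _ _
      have hp₀notF' : p₀ ∉ F' := by
        simp [hF', hp₀F]
        exact hF p₀ hp₀F
      have hss : F' ⊂ F := Finset.ssubset_iff_of_subset hF'sub |>.mpr ⟨p₀, hp₀F, hp₀notF'⟩
      obtain ⟨P', M', hcard, hMsub, hpierce, hmatch, hright⟩ :=
        ih F' hss (fun p hp => hF p (hF'sub hp))
      have hp₀2notP' : p₀.2 ∉ P' := by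
        intro h
        obtain ⟨q, hq, hle⟩ := hright _ h
        have := (Finset.mem_filter.mp hq).2
        linarith
      have hp₀notM' : p₀ ∉ M' := fun h => hp₀notF' (hMsub h)
      refine ⟨insert p₀.2 P', insert p₀ M', ?_, ?_, ?_, ?_, ?_⟩
      · rw [Finset.card_insert_of_notMem hp₀2notP',
          Finset.card_insert_of_notMem hp₀notM', hcard]
      · exact Finset.insert_subset hp₀F (hMsub.trans hF'sub)
      · intro p hp
        by_cases hc : p.1 ≤ p₀.2
        · exact ⟨p₀.2, Finset.mem_insert_self _ _, hc, hp₀min p hp⟩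
        · obtain ⟨t, ht, htI⟩ := hpierce p (Finset.mem_filter.mpr ⟨hp, lt_of_not_ge hc⟩)
          exact ⟨t, Finset.mem_insert_of_mem ht, htI⟩
      · intro p hp q hq hpq
        rcases Finset.mem_insert.mp hp with rfl | hp' <;>
          rcases Finset.mem_insert.mp hq with rfl | hq'
        · exact absurd rfl hpq
        · have := (Finset.mem_filter.mp (hMsub hq')).2
          exact icc_disj (by linarith)
        · have := (Finset.mem_filter.mp (hMsub hp')).2
          exact (icc_disj (by linarith)).symm
        · exact hmatch p hp' q hq' hpq
      · intro t ht
        rcases Finset.mem_insert.mp ht with rfl | ht'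
        · exact ⟨p₀, hp₀F, hF p₀ hp₀F⟩
        · obtain ⟨q, hq, hle⟩ := hright t ht'
          exact ⟨q, hF'sub hq, hle⟩

/-- Weak duality: any matching is at most as large as any piercing set. -/
lemma gallai_weak (F : Finset (ℝ × ℝ)) (P : Finset ℝ) (M : Finset (ℝ × ℝ))
    (hMsub : M ⊆ F)
    (hpierce : ∀ p ∈ F, ∃ t ∈ P, t ∈ Set.Icc p.1 p.2)
    (hmatch : ∀ p ∈ M, ∀ q ∈ M, p ≠ q → Disjoint (Set.Icc p.1 p.2) (Set.Icc q.1 q.2)) :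
    M.card ≤ P.card := by
  have h : ∀ p ∈ M, ∃ t ∈ P, t ∈ Set.Icc p.1 p.2 := fun p hp => hpierce p (hMsub hp)
  choose f hfP hfI using h
  exact Finset.card_le_card_of_injOn (fun p => if hp : p ∈ M then f p hp else 0)
    (by intro p hp; simp only [Finset.mem_coe] at hp ⊢; simp only [hp, dif_pos]; exact hfP p hp)
    (by
      intro p hp q hq hfeq
      simp only [Finset.mem_coe] at hp hq
      simp only [hp, hq, dif_pos] at hfeq
      by_contra hne
      exact (hmatch p hp q hq hne).ne_of_mem (hfI p hp) (hfI q hq) hfeq)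

/-- Gallai's theorem (1959): for a finite family of compact intervals on the real line,
the piercing number equals the matching number. Intervals are encoded as pairs
`(p.1, p.2)` with `p.1 ≤ p.2`, representing `Set.Icc p.1 p.2`. -/
theorem gallai_intervals (F : Finset (ℝ × ℝ)) (hF : ∀ p ∈ F, p.1 ≤ p.2) :
    sInf {n : ℕ | ∃ P : Finset ℝ, P.card = n ∧
        ∀ p ∈ F, ∃ t ∈ P, t ∈ Set.Icc p.1 p.2} =
    sSup {m : ℕ | ∃ M ⊆ F, M.card = m ∧
        ∀ p ∈ M, ∀ q ∈ M, p ≠ q → Disjoint (Set.Icc p.1 p.2) (Set.Icc q.1 q.2)} := by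
  set S := {n : ℕ | ∃ P : Finset ℝ, P.card = n ∧
      ∀ p ∈ F, ∃ t ∈ P, t ∈ Set.Icc p.1 p.2} with hS
  set T := {m : ℕ | ∃ M ⊆ F, M.card = m ∧
      ∀ p ∈ M, ∀ q ∈ M, p ≠ q → Disjoint (Set.Icc p.1 p.2) (Set.Icc q.1 q.2)} with hT
  obtain ⟨P₀, M₀, hcard, hMsub, hpierce, hmatch, _⟩ := gallai_greedy F hF
  have hSne : S.Nonempty := ⟨P₀.card, P₀, rfl, hpierce⟩
  have hTbdd : BddAbove T := by
    refine ⟨F.card, fun m hm => ?_⟩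
    obtain ⟨M, hMF, hMc, _⟩ := hm
    exact hMc ▸ Finset.card_le_card hMF
  apply le_antisymm
  · calc sInf S ≤ P₀.card := Nat.sInf_le ⟨P₀, rfl, hpierce⟩
      _ = M₀.card := hcard
      _ ≤ sSup T := le_csSup hTbdd ⟨M₀, hMsub, rfl, hmatch⟩
  · have hTne : T.Nonempty := ⟨0, ∅, Finset.empty_subset _, by simp, by simp⟩
    apply csSup_le hTne
    intro m hm
    obtain ⟨M, hMF, hMc, hMm⟩ := hm
    obtain ⟨P, hPc, hPp⟩ := Nat.sInf_mem hSne
    rw [← hMc, ← hPc]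
    exact gallai_weak F P M hMF hPp hMm
end

section
/- Let F_1, ..., F_k be finite families of compact intervals in ℝ such that for each i, no set of k-1 points pierces F_i (i.e., τ(F_i) ≥ k). Then there is a rainbow matching: a choice of intervals F_i ∈ F_i for i = 1,...,k such that F_1, ..., F_k are pairwise disjoint. -/
lemma colorful_gallai_aux {ι : Type*} [DecidableEq ι] (k : ℕ) :
    ∀ (S : Finset ι) (F : ι → Finset (ℝ × ℝ)), S.card = k →
    (∀ i ∈ S, ∀ P : Finset ℝ, P.card < k →
      ∃ p ∈ F i, ∀ t ∈ P, t ∉ Set.Icc p.1 p.2) →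
    ∃ f : ι → ℝ × ℝ, (∀ i ∈ S, f i ∈ F i) ∧
      ∀ i ∈ S, ∀ j ∈ S, i ≠ j →
        Disjoint (Set.Icc (f i).1 (f i).2) (Set.Icc (f j).1 (f j).2) := by
  induction k with
  | zero =>
    intro S F hcard _
    refine ⟨fun _ => (0, 0), ?_, ?_⟩ <;> intro i hi <;>
      simp [Finset.card_eq_zero.mp hcard] at hi
  | succ k ih =>
    intro S F hcard hτ
    -- S is nonempty
    have hSne : S.Nonempty := Finset.card_pos.mp (by omega)
    -- the union of all families over S is nonempty
    have hTne : (S.biUnion F).Nonempty := by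
      obtain ⟨i, hi⟩ := hSne
      obtain ⟨p, hp, -⟩ := hτ i hi ∅ (by simp)
      exact ⟨p, Finset.mem_biUnion.mpr ⟨i, hi, hp⟩⟩
    -- pick the interval with minimal right endpoint
    obtain ⟨p1, hp1T, hmin⟩ := Finset.exists_min_image (S.biUnion F) Prod.snd hTne
    obtain ⟨i1, hi1S, hp1⟩ := Finset.mem_biUnion.mp hp1T
    set t : ℝ := p1.2 with ht
    -- filtered families: intervals strictly to the right of t
    set F' : ι → Finset (ℝ × ℝ) := fun j => (F j).filter (fun p => t < p.1) with hF'
    have hτ' : ∀ j ∈ S.erase i1, ∀ P : Finset ℝ, P.card < k →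
        ∃ p ∈ F' j, ∀ s ∈ P, s ∉ Set.Icc p.1 p.2 := by
      intro j hj P hP
      have hjS : j ∈ S := Finset.mem_of_mem_erase hj
      obtain ⟨p, hp, havoid⟩ := hτ j hjS (insert t P)
        (lt_of_le_of_lt (Finset.card_insert_le _ _) (by omega))
      have htp : t ∉ Set.Icc p.1 p.2 := havoid t (Finset.mem_insert_self _ _)
      have htle : t ≤ p.2 := hmin p (Finset.mem_biUnion.mpr ⟨j, hjS, hp⟩)
      have hlt : t < p.1 := by
        by_contra h
        exact htp ⟨le_of_not_gt h, htle⟩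
      refine ⟨p, Finset.mem_filter.mpr ⟨hp, hlt⟩, fun s hs => havoid s ?_⟩
      exact Finset.mem_insert_of_mem hs
    obtain ⟨f', hf'mem, hf'disj⟩ := ih (S.erase i1) F'
      (by rw [Finset.card_erase_of_mem hi1S, hcard]; omega) hτ'
    refine ⟨Function.update f' i1 p1, ?_, ?_⟩
    · intro i hi
      by_cases h : i = i1
      · subst h; simpa using hp1
      · rw [Function.update_of_ne h]
        exact Finset.mem_of_mem_filter _ (hf'mem i (Finset.mem_erase.mpr ⟨h, hi⟩))
    · have key : ∀ j ∈ S.erase i1,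
          Disjoint (Set.Icc p1.1 p1.2) (Set.Icc (f' j).1 (f' j).2) := by
        intro j hj
        have := (Finset.mem_filter.mp (hf'mem j hj)).2
        rw [Set.disjoint_left]
        rintro x ⟨-, hx2⟩ ⟨hx3, -⟩
        have : t < (f' j).1 := this
        linarith
      intro i hi j hj hij
      by_cases h1 : i = i1
      · have hj' : j ∈ S.erase i1 := Finset.mem_erase.mpr ⟨fun h => hij (h1.trans h.symm), hj⟩
        rw [h1, Function.update_self, Function.update_of_ne (Finset.mem_erase.mp hj').1]
        exact key j hj'
      · by_cases h2 : j = i1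
        · have hi' : i ∈ S.erase i1 := Finset.mem_erase.mpr ⟨h1, hi⟩
          rw [h2, Function.update_self, Function.update_of_ne h1]
          exact (key i hi').symm
        · rw [Function.update_of_ne h1, Function.update_of_ne h2]
          exact hf'disj i (Finset.mem_erase.mpr ⟨h1, hi⟩) j
            (Finset.mem_erase.mpr ⟨h2, hj⟩) hij

/-- The colorful Gallai theorem: if `F 1, ..., F k` are finite families of compact
intervals in `ℝ` (encoded as pairs `(a, b)` with `a ≤ b` representing `Set.Icc a b`),
none of which can be pierced by `k - 1` points, then there is a rainbow matching:
one interval from each family, pairwise disjoint. -/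
theorem colorful_gallai (k : ℕ) (hk : 0 < k) (F : Fin k → Finset (ℝ × ℝ))
    (hF : ∀ i, ∀ p ∈ F i, p.1 ≤ p.2)
    (hτ : ∀ i, ∀ P : Finset ℝ, P.card < k →
      ∃ p ∈ F i, ∀ t ∈ P, t ∉ Set.Icc p.1 p.2) :
    ∃ f : Fin k → ℝ × ℝ, (∀ i, f i ∈ F i) ∧
      ∀ i j, i ≠ j → Disjoint (Set.Icc (f i).1 (f i).2) (Set.Icc (f j).1 (f j).2) := by
  obtain ⟨f, hmem, hdisj⟩ := colorful_gallai_aux k Finset.univ F (by simp)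
    (fun i _ => hτ i)
  exact ⟨f, fun i => hmem i (Finset.mem_univ i),
    fun i j hij => hdisj i (Finset.mem_univ i) j (Finset.mem_univ j) hij⟩
end

section
/- Let M and N be matroids on the same finite ground set V. Then there exists a base of M that is independent in N if and only if for every subset X ⊆ V, the rank of X in N is at least the rank of the matroid M.X. -/
set_option linter.unusedSectionVars false
set_option maxHeartbeats 1000000

open Set

/-- The rank of a set `X` in a matroid `M`: the maximum cardinality of an independent
subset of `X`. -/
noncomputable def matroidRank {α : Type*} (M : Matroid α) (X : Set α) : ℕ :=
  sSup {n : ℕ | ∃ I ⊆ X, M.Indep I ∧ I.ncard = n}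

/-- The rank of the matroid `M.X`, the matroid on `X` whose independent sets are those
`S ⊆ X` such that `S ∪ T` is independent in `M` for every independent `T ⊆ M.E \ X`. -/
noncomputable def contractToRank {α : Type*} (M : Matroid α) (X : Set α) : ℕ :=
  sSup {n : ℕ | ∃ S ⊆ X, (∀ T ⊆ M.E \ X, M.Indep T → M.Indep (S ∪ T)) ∧ S.ncard = n}

namespace MriAux

variable {α : Type*} [Fintype α] {M N : Matroid α} {I J J' X Y S C : Set α} {e : α}

lemma rank_bddAbove (M : Matroid α) (X : Set α) :
    BddAbove {n : ℕ | ∃ I ⊆ X, M.Indep I ∧ I.ncard = n} := by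
  refine ⟨Fintype.card α, fun n ⟨I, _, _, h⟩ => ?_⟩
  subst h
  simpa [ncard_univ, Nat.card_eq_fintype_card] using ncard_le_ncard (subset_univ I) (toFinite _)

lemma rank_nonempty (M : Matroid α) (X : Set α) :
    {n : ℕ | ∃ I ⊆ X, M.Indep I ∧ I.ncard = n}.Nonempty :=
  ⟨0, ∅, empty_subset _, M.empty_indep, by simp⟩

lemma ncard_le_rank (h : M.Indep I) (hIX : I ⊆ X) : I.ncard ≤ matroidRank M X :=
  le_csSup (rank_bddAbove M X) ⟨I, hIX, h, rfl⟩

lemma encard_lt_of_ncard_lt (h : I.ncard < J.ncard) : I.encard < J.encard := by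
  rwa [← (toFinite I).cast_ncard_eq, ← (toFinite J).cast_ncard_eq, Nat.cast_lt]

lemma rank_eq_of_basis' (hI : M.IsBasis' I X) : matroidRank M X = I.ncard := by
  refine le_antisymm (csSup_le (rank_nonempty M X) ?_) (ncard_le_rank hI.indep hI.subset)
  rintro n ⟨J, hJX, hJ, rfl⟩
  by_contra hlt
  push_neg at hlt
  obtain ⟨x, hx, hxI⟩ := hI.indep.augment hJ (encard_lt_of_ncard_lt hlt)
  exact hI.insert_not_indep ⟨hJX hx.1, hx.2⟩ hxI

lemma rank_mono (M : Matroid α) (hXY : X ⊆ Y) : matroidRank M X ≤ matroidRank M Y := by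
  obtain ⟨I, hI⟩ := M.exists_isBasis' X
  rw [rank_eq_of_basis' hI]
  exact ncard_le_rank hI.indep (hI.subset.trans hXY)

lemma rank_empty (M : Matroid α) : matroidRank M ∅ = 0 := by
  refine le_antisymm (csSup_le (rank_nonempty M ∅) ?_) (Nat.zero_le _)
  rintro n ⟨J, hJX, hJ, rfl⟩
  simp [subset_empty_iff.1 hJX]

lemma basis'_of_forall_insert (hI : M.Indep I) (hIX : I ⊆ X)
    (h : ∀ x ∈ X \ I, ¬ M.Indep (insert x I)) : M.IsBasis' I X := by
  refine ⟨⟨hI, hIX⟩, fun J ⟨hJ, hJX⟩ hIJ x hxJ => ?_⟩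
  by_contra hxI
  exact h x ⟨hJX hxJ, hxI⟩ (hJ.subset (insert_subset hxJ hIJ))

lemma rank_submod (M : Matroid α) (X Y : Set α) :
    matroidRank M (X ∪ Y) + matroidRank M (X ∩ Y) ≤ matroidRank M X + matroidRank M Y := by
  obtain ⟨I, hI⟩ := M.exists_isBasis' (X ∩ Y)
  obtain ⟨J, hJ, hIJ⟩ := hI.indep.subset_isBasis'_of_subset
    (hI.subset.trans (inter_subset_left.trans subset_union_left))
  rw [rank_eq_of_basis' hI, rank_eq_of_basis' hJ]
  have hJXY : J ∩ (X ∩ Y) = I :=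
    (hI.eq_of_subset_indep (hJ.indep.inter_right _) (subset_inter hIJ hI.subset)
      inter_subset_right).symm
  have key : (J ∩ X).ncard + (J ∩ Y).ncard = J.ncard + I.ncard := by
    have h1 := ncard_union_add_ncard_inter (J ∩ X) (J ∩ Y) (toFinite _) (toFinite _)
    rw [← inter_union_distrib_left, ← inter_inter_distrib_left,
      inter_eq_self_of_subset_left hJ.subset, hJXY] at h1
    omega
  have h2 : (J ∩ X).ncard ≤ matroidRank M X :=
    ncard_le_rank (hJ.indep.inter_right X) inter_subset_right
  have h3 : (J ∩ Y).ncard ≤ matroidRank M Y :=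
    ncard_le_rank (hJ.indep.inter_right Y) inter_subset_right
  omega

lemma base_of_rank_le (hM : M.E = univ) (hI : M.Indep I)
    (h : matroidRank M univ ≤ I.ncard) : M.IsBase I := by
  obtain ⟨B, hB, hIB⟩ := hI.exists_isBase_superset
  have hBb : M.IsBasis' B univ := by
    have := hB.isBasis_ground
    rw [hM] at this
    exact this.isBasis'
  rw [rank_eq_of_basis' hBb] at h
  rwa [eq_of_subset_of_ncard_le hIB h (toFinite _)]


/-- Contraction of a finite matroid by a single non-loop element. -/
noncomputable def contractElem (M : Matroid α) [Fintype α] (e : α) (he : M.Indep {e}) : Matroid α :=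
  (IndepMatroid.ofFinite (E := M.E \ {e}) (toFinite _)
    (Indep := fun I => e ∉ I ∧ M.Indep (insert e I))
    (indep_empty := ⟨notMem_empty e, by simpa using he⟩)
    (indep_subset := fun I J hJ hIJ =>
      ⟨fun heI => hJ.1 (hIJ heI), hJ.2.subset (insert_subset_insert hIJ)⟩)
    (indep_aug := by
      rintro I J ⟨heI, hI⟩ ⟨heJ, hJ⟩ hcard
      have hlt : (insert e I).encard < (insert e J).encard := by
        rw [← (toFinite _).cast_ncard_eq, ← (toFinite _).cast_ncard_eq, Nat.cast_lt,
          ncard_insert_of_notMem heI, ncard_insert_of_notMem heJ]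
        omega
      obtain ⟨x, hx, hxI⟩ := hI.augment hJ hlt
      have hxe : x ≠ e := fun h => hx.2 (h ▸ mem_insert e I)
      have hxJ : x ∈ J := hx.1.resolve_left hxe
      have hxI' : x ∉ I := fun h => hx.2 (mem_insert_of_mem e h)
      exact ⟨x, hxJ, hxI', ⟨by simp [heI, Ne.symm hxe], by rwa [insert_comm] at hxI⟩⟩)
    (subset_ground := by
      rintro I ⟨heI, hI⟩ x hxI
      exact ⟨hI.subset_ground (mem_insert_of_mem e hxI), fun h => heI (h ▸ hxI)⟩)).matroid

@[simp] lemma contractElem_indep (he : M.Indep {e}) :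
    (contractElem M e he).Indep I ↔ e ∉ I ∧ M.Indep (insert e I) := by
  simp [contractElem]

@[simp] lemma contractElem_ground (he : M.Indep {e}) :
    (contractElem M e he).E = M.E \ {e} := rfl


lemma rank_restrict (R : Set α) (hXR : X ⊆ R) :
    matroidRank (M.restrict R) X = matroidRank M X := by
  unfold matroidRank
  congr 1
  ext n
  constructor
  · rintro ⟨I, hIX, hI, rfl⟩
    exact ⟨I, hIX, (Matroid.restrict_indep_iff.1 hI).1, rfl⟩
  · rintro ⟨I, hIX, hI, rfl⟩
    exact ⟨I, hIX, Matroid.restrict_indep_iff.2 ⟨hI, hIX.trans hXR⟩, rfl⟩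

lemma rank_loop (he : ¬ M.Indep {e}) (X : Set α) :
    matroidRank M (insert e X) = matroidRank M X := by
  unfold matroidRank
  congr 1
  ext n
  constructor
  · rintro ⟨I, hIX, hI, rfl⟩
    refine ⟨I, fun x hx => ?_, hI, rfl⟩
    rcases hIX hx with h | h
    · exact absurd (hI.subset (singleton_subset_iff.2 (h ▸ hx))) he
    · exact h
  · rintro ⟨I, hIX, hI, rfl⟩
    exact ⟨I, hIX.trans (subset_insert e X), hI, rfl⟩

lemma rank_contractElem (he : M.Indep {e}) :
    matroidRank (contractElem M e he) X + 1 = matroidRank M (insert e X) := by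
  obtain ⟨I, hI⟩ := (contractElem M e he).exists_isBasis' X
  obtain ⟨heI, hIe⟩ := (contractElem_indep he).1 hI.indep
  have hbasis : M.IsBasis' (insert e I) (insert e X) := by
    refine basis'_of_forall_insert hIe (insert_subset_insert hI.subset) ?_
    rintro x ⟨hxX, hxI⟩ hxind
    have hxe : x ≠ e := fun h => hxI (h ▸ mem_insert e I)
    have hxX' : x ∈ X := (mem_insert_iff.1 hxX).resolve_left hxe
    have hxI' : x ∉ I := fun h => hxI (mem_insert_of_mem e h)
    refine hI.insert_not_indep ⟨hxX', hxI'⟩ ((contractElem_indep he).2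
      ⟨by simp [heI, Ne.symm hxe], by rwa [insert_comm] at hxind⟩)
  rw [rank_eq_of_basis' hI, rank_eq_of_basis' hbasis, ncard_insert_of_notMem heI]

lemma basis'_ncard_eq (hJ : M.IsBasis' J C) (hJ' : M.IsBasis' J' C) : J.ncard = J'.ncard := by
  rw [← rank_eq_of_basis' hJ, ← rank_eq_of_basis' hJ']

lemma indep_union_basis' (hJ : M.IsBasis' J C) (hJ' : M.IsBasis' J' C)
    (hSC : Disjoint S C) (h : M.Indep (S ∪ J)) : M.Indep (S ∪ J') := by
  have hSJb : M.IsBasis' (S ∪ J) (S ∪ C) := by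
    refine basis'_of_forall_insert h (union_subset_union_right S hJ.subset) ?_
    rintro x ⟨hxSC, hxSJ⟩ hxind
    have hxC : x ∈ C := hxSC.resolve_left (fun h' => hxSJ (mem_union_left J h'))
    have hxJ : x ∉ J := fun h' => hxSJ (mem_union_right S h')
    exact hJ.insert_not_indep ⟨hxC, hxJ⟩
      (hxind.subset (insert_subset_insert subset_union_right))
  obtain ⟨K, hK, hJ'K⟩ := hJ'.indep.subset_isBasis'_of_subset
    (hJ'.subset.trans subset_union_right)
  have hKcard : K.ncard = S.ncard + J'.ncard := by
    rw [basis'_ncard_eq hK hSJb, ← basis'_ncard_eq hJ hJ',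
      ncard_union_eq (hSC.mono_right hJ.subset) (toFinite _) (toFinite _)]
  have hKC : K ∩ C = J' :=
    (hJ'.eq_of_subset_indep (hK.indep.inter_right C) (subset_inter hJ'K hJ'.subset)
      inter_subset_right).symm
  have hKdiff : K \ C ⊆ S := by
    rintro x ⟨hxK, hxC⟩
    exact (hK.subset hxK).resolve_right hxC
  have hcard2 : (K \ C).ncard + (K ∩ C).ncard = K.ncard := by
    rw [add_comm]
    exact ncard_inter_add_ncard_diff_eq_ncard K C (toFinite _)
  have hSK : K \ C = S := by
    refine eq_of_subset_of_ncard_le hKdiff ?_ (toFinite _)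
    rw [hKC] at hcard2
    omega
  refine hK.indep.subset (union_subset ?_ hJ'K)
  rw [← hSK]
  exact diff_subset

theorem inter_aux (n : ℕ) (E : Set α) (hEn : E.ncard = n) (M N : Matroid α)
    (hME : M.E = E) (hNE : N.E = E) (k : ℕ)
    (hk : ∀ X ⊆ E, k ≤ matroidRank M X + matroidRank N (E \ X)) :
    ∃ I, M.Indep I ∧ N.Indep I ∧ k ≤ I.ncard := by
  induction n using Nat.strong_induction_on generalizing E M N k with
  | _ n IH =>
  rcases k with _ | k
  · exact ⟨∅, M.empty_indep, N.empty_indep, Nat.zero_le _⟩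
  rcases E.eq_empty_or_nonempty with rfl | ⟨e, heE⟩
  · have h0 := hk ∅ (empty_subset _)
    rw [diff_empty, rank_empty, rank_empty] at h0
    omega
  have hcard : (E \ {e}).ncard + 1 = E.ncard := ncard_diff_singleton_add_one heE (toFinite _)
  have hE'lt : (E \ {e}).ncard < n := by omega
  have hE'sub : E \ {e} ⊆ E := diff_subset
  by_cases hMe : M.Indep {e}
  · by_cases hNe : N.Indep {e}
    · -- e is a non-loop of both
      by_cases hdel : ∀ X ⊆ E \ {e},
          k + 1 ≤ matroidRank (M.restrict (E \ {e})) X +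
            matroidRank (N.restrict (E \ {e})) ((E \ {e}) \ X)
      · obtain ⟨I, hIM, hIN, hIcard⟩ := IH _ hE'lt _ rfl _ _ rfl rfl _ hdel
        exact ⟨I, (Matroid.restrict_indep_iff.1 hIM).1, (Matroid.restrict_indep_iff.1 hIN).1,
          hIcard⟩
      by_cases hcon : ∀ X ⊆ E \ {e},
          k ≤ matroidRank (contractElem M e hMe) X +
            matroidRank (contractElem N e hNe) ((E \ {e}) \ X)
      · obtain ⟨I, hIM, hIN, hIcard⟩ := IH _ hE'lt _ rfl _ _
          (by rw [contractElem_ground, hME]) (by rw [contractElem_ground, hNE]) _ hcon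
        obtain ⟨heI, hIM'⟩ := (contractElem_indep hMe).1 hIM
        obtain ⟨-, hIN'⟩ := (contractElem_indep hNe).1 hIN
        exact ⟨insert e I, hIM', hIN', by rw [ncard_insert_of_notMem heI]; omega⟩
      push_neg at hdel hcon
      obtain ⟨X₁, hX₁, h₁⟩ := hdel
      obtain ⟨X₂, hX₂, h₂⟩ := hcon
      rw [rank_restrict _ hX₁, rank_restrict _ diff_subset] at h₁
      have heX₁ : e ∉ X₁ := fun h => (hX₁ h).2 rfl
      have heX₂ : e ∉ X₂ := fun h => (hX₂ h).2 rfl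
      have hX₁E : X₁ ⊆ E := hX₁.trans diff_subset
      have hX₂E : X₂ ⊆ E := hX₂.trans diff_subset
      have h₂' : matroidRank M (insert e X₂) + matroidRank N (insert e ((E \ {e}) \ X₂))
          ≤ k + 1 := by
        rw [← rank_contractElem hMe, ← rank_contractElem hNe]
        omega
      have ea : (E \ {e}) \ X₁ = E \ insert e X₁ := by
        rw [diff_diff, singleton_union]
      have eb : insert e ((E \ {e}) \ X₂) = E \ X₂ := by
        ext x
        by_cases hxe : x = e <;>
          simp [hxe, heE, heX₂, mem_diff, mem_insert_iff, And.comm, and_assoc]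
      have ec : X₁ ∩ insert e X₂ = X₁ ∩ X₂ := by
        ext x
        by_cases hxe : x = e <;> simp [hxe, heX₁]
      have ed : X₁ ∪ insert e X₂ = insert e (X₁ ∪ X₂) := by
        rw [union_insert]
      have ee : (E \ insert e X₁) ∪ (E \ X₂) = E \ (X₁ ∩ X₂) := by
        rw [← diff_inter]
        congr 1
        ext x
        by_cases hxe : x = e <;> simp [hxe, heX₂]
      have ef : (E \ insert e X₁) ∩ (E \ X₂) = E \ insert e (X₁ ∪ X₂) := by
        rw [diff_inter_diff, insert_union]
      have hsubM := rank_submod M X₁ (insert e X₂)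
      have hsubN := rank_submod N (E \ insert e X₁) (E \ X₂)
      rw [ec, ed] at hsubM
      rw [ee, ef] at hsubN
      rw [ea] at h₁
      rw [eb] at h₂'
      have hk1 := hk (X₁ ∩ X₂) ((inter_subset_left).trans hX₁E)
      have hk2 := hk (insert e (X₁ ∪ X₂)) (insert_subset heE (union_subset hX₁E hX₂E))
      omega
    · -- e is a loop of N
      have hyp : ∀ X ⊆ E \ {e}, k + 1 ≤ matroidRank (M.restrict (E \ {e})) X +
          matroidRank (N.restrict (E \ {e})) ((E \ {e}) \ X) := by
        intro X hX
        have heX : e ∉ X := fun h => (hX h).2 rfl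
        have h1 := hk X (hX.trans diff_subset)
        have eb : E \ X = insert e ((E \ {e}) \ X) := by
          ext x
          by_cases hxe : x = e <;>
            simp [hxe, heE, heX, mem_diff, mem_insert_iff, And.comm, and_assoc]
        rw [eb, rank_loop hNe] at h1
        rw [rank_restrict _ hX, rank_restrict _ diff_subset]
        omega
      obtain ⟨I, hIM, hIN, hIcard⟩ := IH _ hE'lt _ rfl _ _ rfl rfl _ hyp
      exact ⟨I, (Matroid.restrict_indep_iff.1 hIM).1, (Matroid.restrict_indep_iff.1 hIN).1,
        hIcard⟩
  · -- e is a loop of M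
    have hyp : ∀ X ⊆ E \ {e}, k + 1 ≤ matroidRank (M.restrict (E \ {e})) X +
        matroidRank (N.restrict (E \ {e})) ((E \ {e}) \ X) := by
      intro X hX
      have heX : e ∉ X := fun h => (hX h).2 rfl
      have h1 := hk (insert e X) (insert_subset heE (hX.trans diff_subset))
      have ea : E \ insert e X = (E \ {e}) \ X := by
        rw [diff_diff, singleton_union]
      rw [rank_loop hMe, ea] at h1
      rw [rank_restrict _ hX, rank_restrict _ diff_subset]
      omega
    obtain ⟨I, hIM, hIN, hIcard⟩ := IH _ hE'lt _ rfl _ _ rfl rfl _ hyp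
    exact ⟨I, (Matroid.restrict_indep_iff.1 hIM).1, (Matroid.restrict_indep_iff.1 hIN).1,
      hIcard⟩

lemma ctr_bddAbove (M : Matroid α) (X : Set α) :
    BddAbove {n : ℕ | ∃ S ⊆ X, (∀ T ⊆ M.E \ X, M.Indep T → M.Indep (S ∪ T)) ∧ S.ncard = n} := by
  refine ⟨Fintype.card α, fun n ⟨S, _, _, h⟩ => ?_⟩
  subst h
  simpa [ncard_univ, Nat.card_eq_fintype_card] using ncard_le_ncard (subset_univ S) (toFinite _)

lemma ctr_nonempty (M : Matroid α) (X : Set α) :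
    {n : ℕ | ∃ S ⊆ X, (∀ T ⊆ M.E \ X, M.Indep T → M.Indep (S ∪ T)) ∧ S.ncard = n}.Nonempty :=
  ⟨0, ∅, empty_subset _, fun T _ hT => by rwa [empty_union], by simp⟩

lemma contractToRank_add_le (hM : M.E = univ) (X : Set α) :
    contractToRank M X + matroidRank M (univ \ X) ≤ matroidRank M univ := by
  obtain ⟨J, hJ⟩ := M.exists_isBasis' (univ \ X)
  have hle : contractToRank M X ≤ matroidRank M univ - matroidRank M (univ \ X) := by
    refine csSup_le (ctr_nonempty M X) ?_
    rintro n ⟨S, hSX, hprop, rfl⟩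
    have hSJ : M.Indep (S ∪ J) := hprop J (by rw [hM]; exact hJ.subset) hJ.indep
    have hdisj : Disjoint S J :=
      disjoint_sdiff_right.mono hSX hJ.subset
    have hcard : S.ncard + J.ncard ≤ matroidRank M univ := by
      rw [← ncard_union_eq hdisj (toFinite _) (toFinite _)]
      exact ncard_le_rank hSJ (subset_univ _)
    rw [rank_eq_of_basis' hJ]
    omega
  have h2 : matroidRank M (univ \ X) ≤ matroidRank M univ := rank_mono M (subset_univ _)
  omega

lemma le_contractToRank_add (hM : M.E = univ) (X : Set α) :
    matroidRank M univ ≤ contractToRank M X + matroidRank M (univ \ X) := by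
  obtain ⟨J, hJ⟩ := M.exists_isBasis' (univ \ X)
  obtain ⟨B, hB, hJB⟩ := hJ.indep.exists_isBase_superset
  have hBu : M.IsBasis' B univ := by
    have := hB.isBasis_ground
    rw [hM] at this
    exact this.isBasis'
  have hBJ : B ∩ (univ \ X) = J :=
    (hJ.eq_of_subset_indep (hB.indep.inter_right _) (subset_inter hJB hJ.subset)
      inter_subset_right).symm
  set S := B ∩ X with hS
  have hdecomp : S ∪ J = B := by
    rw [hS, ← hBJ, ← inter_union_distrib_left, union_diff_cancel (subset_univ X), inter_univ]
  have hdisjSX : Disjoint S (univ \ X) :=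
    disjoint_sdiff_right.mono_left inter_subset_right
  have hprop : ∀ T ⊆ M.E \ X, M.Indep T → M.Indep (S ∪ T) := by
    intro T hT hTind
    rw [hM] at hT
    obtain ⟨J', hJ', hTJ'⟩ := hTind.subset_isBasis'_of_subset hT
    have : M.Indep (S ∪ J') :=
      indep_union_basis' hJ hJ' hdisjSX (hdecomp ▸ hB.indep)
    exact this.subset (union_subset_union_right S hTJ')
  have hmem : S.ncard ≤ contractToRank M X :=
    le_csSup (ctr_bddAbove M X) ⟨S, inter_subset_right, hprop, rfl⟩
  have hcard : S.ncard + J.ncard = B.ncard := by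
    rw [← hdecomp, ncard_union_eq (hdisjSX.mono_right hJ.subset) (toFinite _) (toFinite _)]
  rw [rank_eq_of_basis' hBu, rank_eq_of_basis' hJ]
  omega


end MriAux

/-- A consequence of Edmonds' matroid intersection theorem: for matroids `M`, `N` on
the same finite ground set `V`, there is a base of `M` independent in `N` if and only
if for every `X ⊆ V` the rank of `X` in `N` is at least the rank of `M.X`. -/
theorem matroid_matchable_iff {α : Type*} [Fintype α]
    (M N : Matroid α) (hM : M.E = Set.univ) (hN : N.E = Set.univ) :
    (∃ B, M.IsBase B ∧ N.Indep B) ↔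
      ∀ X : Set α, contractToRank M X ≤ matroidRank N X := by
  open MriAux in
  constructor
  · rintro ⟨B, hB, hNB⟩ X
    have hBu : M.IsBasis' B univ := by
      have := hB.isBasis_ground
      rw [hM] at this
      exact this.isBasis'
    have h1 := contractToRank_add_le hM X
    have h2 : matroidRank M univ ≤ matroidRank N X + matroidRank M (univ \ X) := by
      have hNX : (B ∩ X).ncard ≤ matroidRank N X :=
        ncard_le_rank (hNB.inter_right X) inter_subset_right
      have hMX : (B \ X).ncard ≤ matroidRank M (univ \ X) :=
        ncard_le_rank (hB.indep.diff X) (diff_subset_diff_left (subset_univ B))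
      have hsplit : (B ∩ X).ncard + (B \ X).ncard = B.ncard :=
        ncard_inter_add_ncard_diff_eq_ncard B X (toFinite _)
      rw [rank_eq_of_basis' hBu]
      omega
    omega
  · intro h
    have key : ∀ X ⊆ (univ : Set α), matroidRank M univ ≤
        matroidRank M X + matroidRank N (univ \ X) := by
      intro Y _
      have h1 := le_contractToRank_add hM (univ \ Y)
      rw [diff_diff_cancel_left (subset_univ Y)] at h1
      have h2 := h (univ \ Y)
      omega
    obtain ⟨I, hIM, hIN, hIcard⟩ := inter_aux (univ : Set α).ncard univ rfl M N hM hN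
      (matroidRank M univ) key
    exact ⟨I, base_of_rank_le hM hIM hIcard, hIN⟩
end

section
/- Let F be a finite family of compact intervals contained in (0,1), and suppose that for every choice of k-1 points u_1 ≤ ... ≤ u_{k-1} in [0,1] some interval of F avoids all of them. Then the sets A_i = {x ∈ Δ_{k-1} : some F ∈ F satisfies F ⊂ (u_{i-1}(x), u_i(x))}, where u_i(x) = x_1 + ... + x_i (with u_0 = 0, u_k = 1), form an open KKM cover of Δ_{k-1}. -/
open Finset in
/-- The `i`-th partial-sum cut point `u_i(x) = x_1 + ... + x_i` determined by a point
`x` of the standard simplex (here `i : ℕ`, summing the coordinates `j` with `j < i`). -/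
def cutPoint {k : ℕ} (x : Fin k → ℝ) (i : ℕ) : ℝ :=
  ∑ j ∈ Finset.univ.filter (fun j : Fin k => (j : ℕ) < i), x j

/-- The set `A i` of points `x` of the standard simplex for which some interval of the
family `F` is contained in the open interval `(u_{i-1}(x), u_i(x))`. Intervals are
encoded as pairs `(a, b)` with `a ≤ b`, representing `Set.Icc a b`. -/
def gallaiKKMSet {k : ℕ} (F : Finset (ℝ × ℝ)) (i : Fin k) : Set (Fin k → ℝ) :=
  {x ∈ stdSimplex ℝ (Fin k) | ∃ p ∈ F,
    Set.Icc p.1 p.2 ⊆ Set.Ioo (cutPoint x (i : ℕ)) (cutPoint x ((i : ℕ) + 1))}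

lemma cutPoint_zero {k : ℕ} (x : Fin k → ℝ) : cutPoint x 0 = 0 := by
  simp [cutPoint]

lemma cutPoint_mono {k : ℕ} {x : Fin k → ℝ} (hx : ∀ j, 0 ≤ x j) :
    Monotone (cutPoint x) := by
  intro a b hab
  apply Finset.sum_le_sum_of_subset_of_nonneg
  · intro j hj
    simp only [Finset.mem_filter, Finset.mem_univ, true_and] at hj ⊢
    omega
  · intros
    exact hx _

lemma cutPoint_succ {k : ℕ} (x : Fin k → ℝ) (i : Fin k) :
    cutPoint x ((i : ℕ) + 1) = cutPoint x (i : ℕ) + x i := by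
  unfold cutPoint
  have h : Finset.univ.filter (fun j : Fin k => (j : ℕ) < (i : ℕ) + 1)
      = insert i (Finset.univ.filter (fun j : Fin k => (j : ℕ) < (i : ℕ))) := by
    ext j
    simp only [Finset.mem_filter, Finset.mem_univ, true_and, Finset.mem_insert,
      Fin.ext_iff]
    omega
  rw [h, Finset.sum_insert (by simp), add_comm]

lemma cutPoint_one {k : ℕ} {x : Fin k → ℝ} (hx : x ∈ stdSimplex ℝ (Fin k))
    {m : ℕ} (hm : k ≤ m) : cutPoint x m = 1 := by
  unfold cutPoint
  rw [Finset.filter_true_of_mem (fun j _ => lt_of_lt_of_le j.2 hm)]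
  exact hx.2

/-- The key covering lemma in the KKM proof of Gallai's theorem: if `F` is a finite
family of compact intervals contained in `(0,1)` such that every `k - 1` points
`u 1 ≤ ... ≤ u (k-1)` of `[0,1]` miss some interval of `F`, then the sets
`A i = gallaiKKMSet F i` form an open KKM cover of the standard simplex: each `A i`
is open relative to the simplex, and every face `σ` satisfies `σ ⊆ ⋃_{i ∈ σ} A i`. -/
theorem gallai_kkm_cover (k : ℕ) (hk : 0 < k) (F : Finset (ℝ × ℝ))
    (hF : ∀ p ∈ F, 0 < p.1 ∧ p.1 ≤ p.2 ∧ p.2 < 1)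
    (hpierce : ∀ u : Fin (k - 1) → ℝ, Monotone u → (∀ j, u j ∈ Set.Icc (0:ℝ) 1) →
      ∃ p ∈ F, ∀ j, u j ∉ Set.Icc p.1 p.2) :
    (∀ i : Fin k,
      IsOpen (Subtype.val ⁻¹' gallaiKKMSet F i : Set (stdSimplex ℝ (Fin k)))) ∧
    (∀ S : Finset (Fin k), S.Nonempty →
      ∀ x ∈ stdSimplex ℝ (Fin k), (∀ i ∉ S, x i = 0) →
        ∃ i ∈ S, x ∈ gallaiKKMSet F i) := by
  classical
  have hcont : ∀ n : ℕ, Continuous (fun x : Fin k → ℝ => cutPoint x n) := by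
    intro n
    exact continuous_finset_sum _ (fun j _ => continuous_apply j)
  constructor
  · intro i
    have heq : (Subtype.val ⁻¹' gallaiKKMSet F i : Set (stdSimplex ℝ (Fin k)))
        = ⋃ p ∈ F, ({x : stdSimplex ℝ (Fin k) | cutPoint x.val (i : ℕ) < p.1} ∩
            {x : stdSimplex ℝ (Fin k) | p.2 < cutPoint x.val ((i : ℕ) + 1)}) := by
      ext x
      simp only [Set.mem_preimage, gallaiKKMSet, Set.mem_setOf_eq, Set.mem_iUnion,
        Set.mem_inter_iff, Set.mem_sep_iff, exists_prop]
      constructor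
      · rintro ⟨-, p, hp, hsub⟩
        exact ⟨p, hp, (Set.Icc_subset_Ioo_iff (hF p hp).2.1).1 hsub⟩
      · rintro ⟨p, hp, h1, h2⟩
        exact ⟨x.2, p, hp, (Set.Icc_subset_Ioo_iff (hF p hp).2.1).2 ⟨h1, h2⟩⟩
    rw [heq]
    apply isOpen_biUnion
    intro p _
    exact (isOpen_lt ((hcont i).comp continuous_subtype_val) continuous_const).inter
      (isOpen_lt continuous_const ((hcont ((i : ℕ) + 1)).comp continuous_subtype_val))
  · intro S hS x hx hxS
    have hx0 : ∀ j, 0 ≤ x j := hx.1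
    have hmono := cutPoint_mono hx0
    set u : Fin (k - 1) → ℝ := fun j => cutPoint x ((j : ℕ) + 1) with hu
    obtain ⟨p, hp, hmiss⟩ := hpierce u
      (fun a b hab => hmono (by simp only [Fin.le_def] at hab; omega))
      (fun j => ⟨by rw [← cutPoint_zero x]; exact hmono (Nat.zero_le _),
        by rw [← cutPoint_one hx (le_refl k)]; exact hmono (by omega)⟩)
    obtain ⟨hp1, hp12, hp2⟩ := hF p hp
    set P : ℕ → Prop := fun m => cutPoint x m < p.1 with hP
    have hP0 : P 0 := by rw [hP]; simpa [cutPoint_zero] using hp1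
    set i := Nat.findGreatest P k with hi
    have hPi : P i := Nat.findGreatest_spec (Nat.zero_le k) hP0
    have hik : i < k := by
      rcases lt_or_eq_of_le (Nat.findGreatest_le k : i ≤ k) with h | h
      · exact h
      · exfalso
        have h2 : cutPoint x i < p.1 := hPi
        rw [hi, h, cutPoint_one hx (le_refl k)] at h2
        linarith
    have hge : ¬ P (i + 1) := Nat.findGreatest_is_greatest (Nat.lt_succ_self i) (by omega)
    rw [hP, not_lt] at hge
    have hnext : p.2 < cutPoint x (i + 1) := by
      rcases lt_or_eq_of_le (Nat.succ_le_of_lt hik) with h | h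
      · have hm := hmiss ⟨i, by omega⟩
        simp only [hu, Set.mem_Icc, not_and, not_le] at hm
        exact hm hge
      · have h' : i + 1 = k := h
        rw [h', cutPoint_one hx (le_refl k)]
        exact hp2
    have hxi : x ⟨i, hik⟩ ≠ 0 := by
      intro h0
      have hs := cutPoint_succ x ⟨i, hik⟩
      rw [h0, add_zero] at hs
      rw [hP] at hPi
      simp only at hs
      rw [hs] at hnext
      linarith
    refine ⟨⟨i, hik⟩, ?_, hx, p, hp, ?_⟩
    · by_contra h
      exact hxi (hxS _ h)
    · rw [Set.Icc_subset_Ioo_iff hp12]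
      exact ⟨hPi, hnext⟩
end

section
/- Let F_1, ..., F_n be finite families of convex sets in ℝ^2 such that A ∩ B ≠ ∅ whenever A ∈ F_i and B ∈ F_j with i ≠ j. Then either (1) there exists j ∈ [n] such that the union of all families F_i with i ≠ j can be pierced by a single point, or (2) the union of all n families can be pierced by 2 lines. -/
/-- A line in the plane `ℝ × ℝ` with normal vector `(a, b) ≠ 0`:
`{x | a * x.1 + b * x.2 = c}`. -/
def planeLine (a b c : ℝ) : Set (ℝ × ℝ) := {x : ℝ × ℝ | a * x.1 + b * x.2 = c}

open Set
open scoped Pointwise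


private lemma core_sep {W : Set (ℝ × ℝ)} (hW : Convex ℝ W) (hWn : W.Nonempty)
    (h0 : (0 : ℝ × ℝ) ∉ W) :
    ∃ a b : ℝ, (a, b) ≠ ((0 : ℝ), (0 : ℝ)) ∧ ∀ w ∈ W, a * w.1 + b * w.2 ≤ 0 := by
  classical
  by_cases hdet : ∃ u ∈ W, ∃ v ∈ W, ∃ z ∈ W,
      (v.1 - u.1) * (z.2 - u.2) - (v.2 - u.2) * (z.1 - u.1) ≠ 0
  · -- full-dimensional case
    obtain ⟨u, hu, v, hv, z, hz, hD⟩ := hdet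
    have hspan : affineSpan ℝ W = ⊤ := by
      rw [eq_top_iff]
      rintro x -
      have hx : x = (((v.1 - u.1) * (x.2 - u.2) - (v.2 - u.2) * (x.1 - u.1)) /
            ((v.1 - u.1) * (z.2 - u.2) - (v.2 - u.2) * (z.1 - u.1))) • (z -ᵥ u) +ᵥ
          ((((x.1 - u.1) * (z.2 - u.2) - (x.2 - u.2) * (z.1 - u.1)) /
            ((v.1 - u.1) * (z.2 - u.2) - (v.2 - u.2) * (z.1 - u.1))) • (v -ᵥ u) +ᵥ u) := by
        simp only [vsub_eq_sub, vadd_eq_add, Prod.ext_iff, Prod.fst_add, Prod.snd_add,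
          Prod.smul_fst, Prod.smul_snd, Prod.fst_sub, Prod.snd_sub, smul_eq_mul]
        constructor
        · field_simp
          ring
        · field_simp
          ring
      rw [hx]
      exact AffineSubspace.smul_vsub_vadd_mem _ _ (subset_affineSpan ℝ W hz)
        (subset_affineSpan ℝ W hu)
        (AffineSubspace.smul_vsub_vadd_mem _ _ (subset_affineSpan ℝ W hv)
          (subset_affineSpan ℝ W hu) (subset_affineSpan ℝ W hu))
    have hint : (interior W).Nonempty := hW.interior_nonempty_iff_affineSpan_eq_top.mpr hspan
    obtain ⟨m, hm⟩ := hint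
    obtain ⟨f, hf⟩ := geometric_hahn_banach_open_point hW.interior isOpen_interior
      (fun h : (0 : ℝ × ℝ) ∈ interior W => h0 (interior_subset h))
    have hfx : ∀ x : ℝ × ℝ, f x = f (1, 0) * x.1 + f (0, 1) * x.2 := by
      intro x
      have h : (x : ℝ × ℝ) = x.1 • ((1 : ℝ), (0 : ℝ)) + x.2 • ((0 : ℝ), (1 : ℝ)) := by
        ext <;> simp
      conv_lhs => rw [h]
      rw [map_add, map_smul, map_smul, smul_eq_mul, smul_eq_mul]
      ring
    have hm0 : f (1, 0) * m.1 + f (0, 1) * m.2 < 0 := by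
      have := hf m hm
      rw [map_zero, hfx] at this
      exact this
    refine ⟨f (1, 0), f (0, 1), ?_, ?_⟩
    · intro h
      rw [Prod.mk.injEq] at h
      rw [h.1, h.2] at hm0; linarith
    · intro w hw
      by_contra hpos
      push_neg at hpos
      have hmem : ∀ t : ℝ, 0 < t → t ≤ 1 → t • m + (1 - t) • w ∈ interior W := by
        intro t ht0 ht1
        exact hW.combo_interior_closure_subset_interior (a := t) (b := 1 - t) ht0
          (by linarith) (by ring)
          (Set.add_mem_add (smul_mem_smul_set hm) (smul_mem_smul_set (subset_closure hw)))
      have hfval : ∀ t : ℝ, 0 < t → t ≤ 1 →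
          t * (f (1, 0) * m.1 + f (0, 1) * m.2) + (1 - t) * (f (1, 0) * w.1 + f (0, 1) * w.2)
            < 0 := by
        intro t ht0 ht1
        have hlt := hf _ (hmem t ht0 ht1)
        rw [map_zero, hfx] at hlt
        calc t * (f (1, 0) * m.1 + f (0, 1) * m.2)
              + (1 - t) * (f (1, 0) * w.1 + f (0, 1) * w.2)
            = f (1, 0) * (t • m + (1 - t) • w).1 + f (0, 1) * (t • m + (1 - t) • w).2 := by
              simp only [Prod.fst_add, Prod.snd_add, Prod.smul_fst, Prod.smul_snd, smul_eq_mul]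
              ring
          _ < 0 := hlt
      set fm : ℝ := f (1, 0) * m.1 + f (0, 1) * m.2 with hfmd
      set fw : ℝ := f (1, 0) * w.1 + f (0, 1) * w.2 with hfwd
      have hd : 0 < fw - fm := by linarith
      have h1 : (0:ℝ) < fw / (fw - fm) := div_pos (by linarith) hd
      have h2 : fw / (fw - fm) ≤ 1 := by rw [div_le_one hd]; linarith
      have := hfval _ h1 h2
      have hz : (fw / (fw - fm)) * fm + (1 - fw / (fw - fm)) * fw = 0 := by
        field_simp
        ring
      linarith
  · -- degenerate case: W is contained in a line (or a point)
    push_neg at hdet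
    obtain ⟨w₀, hw₀⟩ := hWn
    have hw₀0 : w₀ ≠ 0 := fun h => h0 (h ▸ hw₀)
    by_cases hone : ∃ w₁ ∈ W, w₁ ≠ w₀
    · obtain ⟨w₁, hw₁, hne⟩ := hone
      have hconst : ∀ w ∈ W,
          (-(w₁.2 - w₀.2)) * w.1 + (w₁.1 - w₀.1) * w.2
            = (-(w₁.2 - w₀.2)) * w₀.1 + (w₁.1 - w₀.1) * w₀.2 := by
        intro w hw
        have h := hdet w₀ hw₀ w₁ hw₁ w hw
        linear_combination h
      have hd0 : ¬(-(w₁.2 - w₀.2) = 0 ∧ w₁.1 - w₀.1 = 0) := by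
        rintro ⟨h2, h1⟩
        exact hne (by ext <;> [linarith; linarith])
      by_cases hele : (-(w₁.2 - w₀.2)) * w₀.1 + (w₁.1 - w₀.1) * w₀.2 ≤ 0
      · refine ⟨-(w₁.2 - w₀.2), w₁.1 - w₀.1, ?_, ?_⟩
        · intro h
          rw [Prod.mk.injEq] at h
          exact hd0 h
        · intro w hw; rw [hconst w hw]; exact hele
      · refine ⟨w₁.2 - w₀.2, -(w₁.1 - w₀.1), ?_, ?_⟩
        · intro h
          rw [Prod.mk.injEq] at h
          exact hd0 ⟨by linarith [h.1], by linarith [h.2]⟩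
        · intro w hw
          have := hconst w hw
          push_neg at hele
          nlinarith [this]
    · push_neg at hone
      refine ⟨-w₀.1, -w₀.2, ?_, ?_⟩
      · intro h
        rw [Prod.mk.injEq] at h
        apply hw₀0
        rw [Prod.ext_iff]
        simp only [Prod.fst_zero, Prod.snd_zero]
        exact ⟨by linarith [h.1], by linarith [h.2]⟩
      · intro w hw
        rw [hone w hw]
        nlinarith [sq_nonneg w₀.1, sq_nonneg w₀.2]

/-- Separation of two disjoint nonempty convex sets in the plane by a line. -/
private lemma exists_sep {U V : Set (ℝ × ℝ)} (hU : Convex ℝ U) (hV : Convex ℝ V)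
    (hUn : U.Nonempty) (hVn : V.Nonempty) (hd : ∀ x, x ∈ U → x ∈ V → False) :
    ∃ a b c : ℝ, (a, b) ≠ ((0 : ℝ), (0 : ℝ)) ∧ (∀ u ∈ U, a * u.1 + b * u.2 ≤ c) ∧
      (∀ v ∈ V, c ≤ a * v.1 + b * v.2) := by
  have hWc : Convex ℝ (U - V) := hU.sub hV
  have hWn : (U - V).Nonempty := by
    obtain ⟨u, hu⟩ := hUn; obtain ⟨v, hv⟩ := hVn
    exact ⟨u - v, Set.mem_sub.mpr ⟨u, hu, v, hv, rfl⟩⟩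
  have h0 : (0 : ℝ × ℝ) ∉ U - V := by
    intro h
    obtain ⟨u, hu, v, hv, huv⟩ := Set.mem_sub.mp h
    exact hd u hu (by rwa [sub_eq_zero.mp huv])
  obtain ⟨a, b, hab, hle⟩ := core_sep hWc hWn h0
  have key : ∀ u ∈ U, ∀ v ∈ V, a * u.1 + b * u.2 ≤ a * v.1 + b * v.2 := by
    intro u hu v hv
    have := hle (u - v) (Set.mem_sub.mpr ⟨u, hu, v, hv, rfl⟩)
    simp only [Prod.fst_sub, Prod.snd_sub] at this
    linarith
  obtain ⟨u₀, hu₀⟩ := hUn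
  refine ⟨a, b, sInf ((fun v : ℝ × ℝ => a * v.1 + b * v.2) '' V), hab, ?_, ?_⟩
  · intro u hu
    apply le_csInf (hVn.image _)
    rintro y ⟨v, hv, rfl⟩
    exact key u hu v hv
  · intro v hv
    apply csInf_le
    · exact ⟨a * u₀.1 + b * u₀.2, by rintro y ⟨v', hv', rfl⟩; exact key u₀ hu₀ v' hv'⟩
    · exact ⟨v, hv, rfl⟩

/-- A convex set containing points on both sides of a line meets the line. -/
private lemma seg_cross {X : Set (ℝ × ℝ)} (hX : Convex ℝ X) {a b c : ℝ} {x y : ℝ × ℝ}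
    (hx : x ∈ X) (hy : y ∈ X) (h1 : a * x.1 + b * x.2 ≤ c) (h2 : c ≤ a * y.1 + b * y.2) :
    ∃ z ∈ X, a * z.1 + b * z.2 = c := by
  rcases eq_or_lt_of_le (h1.trans h2) with h | h
  · exact ⟨x, hx, le_antisymm h1 (by rw [← h] at h2; exact h2)⟩
  · have hd : (0:ℝ) < (a * y.1 + b * y.2) - (a * x.1 + b * x.2) := by linarith
    set t : ℝ := (c - (a * x.1 + b * x.2)) / ((a * y.1 + b * y.2) - (a * x.1 + b * x.2))
      with htd
    have ht0 : 0 ≤ t := div_nonneg (by linarith) (le_of_lt hd)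
    have ht1 : t ≤ 1 := by rw [div_le_one hd]; linarith
    refine ⟨(1 - t) • x + t • y, hX hx hy (by linarith) ht0 (by ring), ?_⟩
    have hkey : t * ((a * y.1 + b * y.2) - (a * x.1 + b * x.2))
        = c - (a * x.1 + b * x.2) := div_mul_cancel₀ _ (ne_of_gt hd)
    simp only [Prod.fst_add, Prod.snd_add, Prod.smul_fst, Prod.smul_snd, smul_eq_mul]
    linear_combination hkey

/-- Extract a bad triple via Helly's theorem. -/
private lemma helly_triple (H : Finset (Set (ℝ × ℝ))) (hc : ∀ X ∈ H, Convex ℝ X)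
    (hpair : ∀ X ∈ H, ∀ Y ∈ H, (X ∩ Y).Nonempty)
    (hempty : ¬ (⋂₀ (H : Set (Set (ℝ × ℝ)))).Nonempty) :
    ∃ A ∈ H, ∃ B ∈ H, ∃ C ∈ H, A ∩ (B ∩ C) = ∅ := by
  classical
  by_contra hcon
  push_neg at hcon
  apply hempty
  apply Convex.helly_theorem_set' hc
  intro G hG hcard
  have hfr : Module.finrank ℝ (ℝ × ℝ) = 2 := by simp [Module.finrank_prod]
  rw [hfr] at hcard
  have h03 : G.card = 0 ∨ G.card = 1 ∨ G.card = 2 ∨ G.card = 3 := by omega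
  rcases h03 with h | h | h | h
  · rw [Finset.card_eq_zero] at h
    subst h
    simp
  · obtain ⟨A, rfl⟩ := Finset.card_eq_one.mp h
    have hA : A ∈ H := hG (Finset.mem_singleton_self A)
    have := hpair A hA A hA
    rw [Set.inter_self] at this
    simpa using this
  · obtain ⟨A, B, hne, rfl⟩ := Finset.card_eq_two.mp h
    have hA : A ∈ H := hG (by simp)
    have hB : B ∈ H := hG (by simp)
    have := hpair A hA B hB
    simpa using this
  · obtain ⟨A, B, C, _, _, _, rfl⟩ := Finset.card_eq_three.mp h
    have hA : A ∈ H := hG (by simp)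
    have hB : B ∈ H := hG (by simp)
    have hC : C ∈ H := hG (by simp)
    have := hcon A hA B hB C hC
    simpa [Set.inter_assoc] using this

/-- Two lines crossing every convex set that meets all of `A`, `B`, `C`, where
`A`, `B`, `C` are convex, `A ∩ B`, `B ∩ C` are nonempty and `A ∩ B ∩ C = ∅`. -/
private lemma two_lines_of_triple {A B C : Set (ℝ × ℝ)} (hA : Convex ℝ A) (hB : Convex ℝ B)
    (hC : Convex ℝ C) (hABn : (A ∩ B).Nonempty) (hBCn : (B ∩ C).Nonempty)
    (htriple : A ∩ (B ∩ C) = ∅) :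
    ∃ a₁ b₁ c₁ a₂ b₂ c₂ : ℝ, (a₁, b₁) ≠ ((0:ℝ), (0:ℝ)) ∧ (a₂, b₂) ≠ ((0:ℝ), (0:ℝ)) ∧
      ∀ X : Set (ℝ × ℝ), Convex ℝ X → (X ∩ A).Nonempty → (X ∩ B).Nonempty →
        (X ∩ C).Nonempty →
        (X ∩ (planeLine a₁ b₁ c₁ ∪ planeLine a₂ b₂ c₂)).Nonempty := by
  classical
  have hAn : A.Nonempty := ⟨hABn.choose, hABn.choose_spec.1⟩
  have hBC : Convex ℝ (B ∩ C) := hB.inter hC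
  have hdAB : ∀ x, x ∈ A → x ∈ B ∩ C → False := by
    intro x hx1 hx2
    rw [Set.eq_empty_iff_forall_notMem] at htriple
    exact htriple x ⟨hx1, hx2⟩
  obtain ⟨a₁, b₁, c₁, hab₁, hA₁, hBC₁⟩ := exists_sep hA hBC hAn hBCn hdAB
  set B' : Set (ℝ × ℝ) := B ∩ {x : ℝ × ℝ | a₁ * x.1 + b₁ * x.2 < c₁} with hB'd
  set C' : Set (ℝ × ℝ) := C ∩ {x : ℝ × ℝ | a₁ * x.1 + b₁ * x.2 < c₁} with hC'd
  have hhalf : Convex ℝ {x : ℝ × ℝ | a₁ * x.1 + b₁ * x.2 < c₁} := by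
    apply convex_halfSpace_lt (f := fun x : ℝ × ℝ => a₁ * x.1 + b₁ * x.2)
    constructor
    · intro x y; simp only [Prod.fst_add, Prod.snd_add]; ring
    · intro c x
      simp only [Prod.smul_fst, Prod.smul_snd, smul_eq_mul]
      ring
  by_cases hB'n : B'.Nonempty
  · by_cases hC'n : C'.Nonempty
    · have hdB'C' : ∀ x, x ∈ B' → x ∈ C' → False := by
        intro x hx1 hx2
        have : x ∈ B ∩ C := ⟨hx1.1, hx2.1⟩
        have h := hBC₁ x this
        exact absurd h (not_le.mpr hx1.2)
      obtain ⟨a₂, b₂, c₂, hab₂, hB₂, hC₂⟩ :=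
        exists_sep (hB.inter hhalf) (hC.inter hhalf) hB'n hC'n hdB'C'
      refine ⟨a₁, b₁, c₁, a₂, b₂, c₂, hab₁, hab₂, ?_⟩
      intro X hX hXA hXB hXC
      obtain ⟨xa, hxaX, hxaA⟩ := hXA
      obtain ⟨xb, hxbX, hxbB⟩ := hXB
      obtain ⟨xc, hxcX, hxcC⟩ := hXC
      by_cases h1 : c₁ ≤ a₁ * xb.1 + b₁ * xb.2
      · obtain ⟨z, hzX, hz⟩ := seg_cross hX hxaX hxbX (hA₁ xa hxaA) h1
        exact ⟨z, hzX, Or.inl hz⟩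
      · by_cases h2 : c₁ ≤ a₁ * xc.1 + b₁ * xc.2
        · obtain ⟨z, hzX, hz⟩ := seg_cross hX hxaX hxcX (hA₁ xa hxaA) h2
          exact ⟨z, hzX, Or.inl hz⟩
        · push_neg at h1 h2
          have hxbB' : xb ∈ B' := ⟨hxbB, h1⟩
          have hxcC' : xc ∈ C' := ⟨hxcC, h2⟩
          obtain ⟨z, hzX, hz⟩ := seg_cross hX hxbX hxcX (hB₂ xb hxbB') (hC₂ xc hxcC')
          exact ⟨z, hzX, Or.inr hz⟩
    · -- C' empty : C ⊆ {f₁ ≥ c₁}, one line suffices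
      refine ⟨a₁, b₁, c₁, a₁, b₁, c₁, hab₁, hab₁, ?_⟩
      intro X hX hXA hXB hXC
      obtain ⟨xa, hxaX, hxaA⟩ := hXA
      obtain ⟨xc, hxcX, hxcC⟩ := hXC
      have h2 : c₁ ≤ a₁ * xc.1 + b₁ * xc.2 := by
        by_contra h
        push_neg at h
        exact hC'n ⟨xc, hxcC, h⟩
      obtain ⟨z, hzX, hz⟩ := seg_cross hX hxaX hxcX (hA₁ xa hxaA) h2
      exact ⟨z, hzX, Or.inl hz⟩
  · -- B' empty
    refine ⟨a₁, b₁, c₁, a₁, b₁, c₁, hab₁, hab₁, ?_⟩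
    intro X hX hXA hXB hXC
    obtain ⟨xa, hxaX, hxaA⟩ := hXA
    obtain ⟨xb, hxbX, hxbB⟩ := hXB
    have h1 : c₁ ≤ a₁ * xb.1 + b₁ * xb.2 := by
      by_contra h
      push_neg at h
      exact hB'n ⟨xb, hxbB, h⟩
    obtain ⟨z, hzX, hz⟩ := seg_cross hX hxaX hxbX (hA₁ xa hxaA) h1
    exact ⟨z, hzX, Or.inl hz⟩

/-- The theorem of Gomez-Navarro and Roldán-Pensado (2024): if `F 1, ..., F n` are
finite families of convex sets in the plane such that any two sets from different
families intersect, then either some `F j` can be removed so that the union of the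
remaining families is pierced by a single point, or the union of all families is
pierced by two lines. -/
theorem cross_intersecting_families (n : ℕ) (F : Fin n → Finset (Set (ℝ × ℝ)))
    (hconv : ∀ i, ∀ S ∈ F i, Convex ℝ S)
    (hcross : ∀ i j, i ≠ j → ∀ S ∈ F i, ∀ T ∈ F j, (S ∩ T).Nonempty) :
    (∃ j : Fin n, ∃ p : ℝ × ℝ, ∀ i, i ≠ j → ∀ S ∈ F i, p ∈ S) ∨
    (∃ a₁ b₁ c₁ a₂ b₂ c₂ : ℝ, (a₁, b₁) ≠ (0, 0) ∧ (a₂, b₂) ≠ (0, 0) ∧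
      ∀ i, ∀ S ∈ F i, (S ∩ (planeLine a₁ b₁ c₁ ∪ planeLine a₂ b₂ c₂)).Nonempty) := by
  classical
  rcases Nat.eq_zero_or_pos n with hn | hn
  · subst hn
    exact Or.inr ⟨1, 0, 0, 1, 0, 0, by simp, by simp, fun i => i.elim0⟩
  -- `bad k` : family `k` contains two disjoint members
  set bad : Fin n → Prop := fun k => ∃ S ∈ F k, ∃ T ∈ F k, S ∩ T = ∅ with hbadd
  by_cases h2 : ∃ k m, k ≠ m ∧ bad k ∧ bad m
  · -- two distinct families with disjoint pairs: two separating lines suffice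
    obtain ⟨k, m, hkm, ⟨S, hS, T, hT, hST⟩, ⟨S', hS', T', hT', hST'⟩⟩ := h2
    obtain ⟨xs, hxs⟩ := hcross k m hkm S hS S' hS'
    obtain ⟨xt, hxt⟩ := hcross k m hkm T hT T' hT'
    have hSn : S.Nonempty := ⟨xs, hxs.1⟩
    have hTn : T.Nonempty := ⟨xt, hxt.1⟩
    have hS'n : S'.Nonempty := ⟨xs, hxs.2⟩
    have hT'n : T'.Nonempty := ⟨xt, hxt.2⟩
    have hdST : ∀ x, x ∈ S → x ∈ T → False := by
      intro x h1 h1'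
      rw [Set.eq_empty_iff_forall_notMem] at hST
      exact hST x ⟨h1, h1'⟩
    have hdST' : ∀ x, x ∈ S' → x ∈ T' → False := by
      intro x h1 h1'
      rw [Set.eq_empty_iff_forall_notMem] at hST'
      exact hST' x ⟨h1, h1'⟩
    obtain ⟨a₁, b₁, c₁, hab₁, hS₁, hT₁⟩ :=
      exists_sep (hconv k S hS) (hconv k T hT) hSn hTn hdST
    obtain ⟨a₂, b₂, c₂, hab₂, hS₂, hT₂⟩ :=
      exists_sep (hconv m S' hS') (hconv m T' hT') hS'n hT'n hdST'
    refine Or.inr ⟨a₁, b₁, c₁, a₂, b₂, c₂, hab₁, hab₂, ?_⟩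
    intro i X hX
    by_cases hik : i = k
    · subst hik
      -- X meets S' and T', so X crosses line 2
      obtain ⟨x1, hx1⟩ := hcross i m hkm X hX S' hS'
      obtain ⟨x2, hx2⟩ := hcross i m hkm X hX T' hT'
      obtain ⟨z, hzX, hz⟩ := seg_cross (hconv i X hX) hx1.1 hx2.1
        (hS₂ x1 hx1.2) (hT₂ x2 hx2.2)
      exact ⟨z, hzX, Or.inr hz⟩
    · obtain ⟨x1, hx1⟩ := hcross i k hik X hX S hS
      obtain ⟨x2, hx2⟩ := hcross i k hik X hX T hT
      obtain ⟨z, hzX, hz⟩ := seg_cross (hconv i X hX) hx1.1 hx2.1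
        (hS₁ x1 hx1.2) (hT₁ x2 hx2.2)
      exact ⟨z, hzX, Or.inl hz⟩
  · -- at most one bad family
    have huniq : ∀ k m : Fin n, bad k → bad m → k = m := by
      intro k m hk hm
      by_contra hne
      exact h2 ⟨k, m, hne, hk, hm⟩
    have hk₀ : ∃ k₀ : Fin n, ∀ m, m ≠ k₀ → ¬ bad m := by
      by_cases hex : ∃ k, bad k
      · obtain ⟨k, hk⟩ := hex
        exact ⟨k, fun m hm hbm => hm (huniq m k hbm hk)⟩
      · push_neg at hex
        exact ⟨⟨0, hn⟩, fun m _ => hex m⟩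
    obtain ⟨k₀, hgood⟩ := hk₀
    set H : Finset (Set (ℝ × ℝ)) := (Finset.univ.filter (fun i : Fin n => i ≠ k₀)).biUnion F
      with hHd
    have hmemH : ∀ X : Set (ℝ × ℝ), X ∈ H ↔ ∃ i : Fin n, i ≠ k₀ ∧ X ∈ F i := by
      intro X
      simp [hHd, Finset.mem_biUnion, Finset.mem_filter]
    have hHconv : ∀ X ∈ H, Convex ℝ X := by
      intro X hX
      obtain ⟨i, _, hXi⟩ := (hmemH X).1 hX
      exact hconv i X hXi
    have hHpair : ∀ X ∈ H, ∀ Y ∈ H, (X ∩ Y).Nonempty := by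
      intro X hX Y hY
      obtain ⟨i, hi, hXi⟩ := (hmemH X).1 hX
      obtain ⟨j, hj, hYj⟩ := (hmemH Y).1 hY
      by_cases hij : i = j
      · subst hij
        rw [Set.nonempty_iff_ne_empty]
        intro hemp
        exact hgood i hi ⟨X, hXi, Y, hYj, hemp⟩
      · exact hcross i j hij X hXi Y hYj
    by_cases hpierce : (⋂₀ (H : Set (Set (ℝ × ℝ)))).Nonempty
    · obtain ⟨p, hp⟩ := hpierce
      refine Or.inl ⟨k₀, p, fun i hi S hS => ?_⟩
      exact hp S ((hmemH S).2 ⟨i, hi, hS⟩)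
    · obtain ⟨A, hAH, B, hBH, C, hCH, htrip⟩ := helly_triple H hHconv hHpair hpierce
      have hmeets : ∀ D ∈ H, ∀ i : Fin n, ∀ X ∈ F i, (X ∩ D).Nonempty := by
        intro D hD i X hX
        obtain ⟨m, hm, hDm⟩ := (hmemH D).1 hD
        by_cases him : i = m
        · subst him
          rw [Set.nonempty_iff_ne_empty]
          intro hemp
          exact hgood i hm ⟨X, hX, D, hDm, hemp⟩
        · exact hcross i m him X hX D hDm
      obtain ⟨a₁, b₁, c₁, a₂, b₂, c₂, hne1, hne2, hlines⟩ :=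
        two_lines_of_triple (hHconv A hAH) (hHconv B hBH) (hHconv C hCH)
          (hHpair A hAH B hBH) (hHpair B hBH C hCH) htrip
      refine Or.inr ⟨a₁, b₁, c₁, a₂, b₂, c₂, hne1, hne2, fun i X hX => ?_⟩
      exact hlines X (hconv i X hX) (hmeets A hAH i X hX) (hmeets B hBH i X hX)
        (hmeets C hCH i X hX)
end
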